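/- Let c* > 0. Let u : ℝ^N × [0,∞) → ℝ be continuous, nonnegative, and bounded (sup_{x,t} u(x,t) < ∞), and define v(x,t) = ∫₀^∞ e^{−s} ∫_{ℝ^N} G(x−y, s) u(y,t) dy ds. If for every c > c* one has lim_{t→∞} sup_{|x| ≥ ct} u(x,t) = 0, then for every c > c* one also has lim_{t→∞} sup_{|x| ≥ ct} v(x,t) = 0. -/

import Mathlib

open MeasureTheory Real Set Filter
open scoped ENNReal

noncomputable section

/-- Euclidean space `ℝ^N`. -/
abbrev Spc (N : ℕ) := EuclideanSpace ℝ (Fin N)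

/-- Partial derivative of `f` in the `i`-th coordinate direction. -/
noncomputable def pdir {N : ℕ} (f : Spc N → ℝ) (i : Fin N) (x : Spc N) : ℝ :=
  fderiv ℝ f x (EuclideanSpace.single i 1)

/-- Laplacian `Δf = ∑ i ∂²f/∂xᵢ²`. -/
noncomputable def lapl {N : ℕ} (f : Spc N → ℝ) (x : Spc N) : ℝ :=
  ∑ i, pdir (pdir f i) i x

/-- The chemotaxis term `∇·(u ∇v) = ∑ i ∂ᵢ (u ∂ᵢ v)`. -/
noncomputable def divg {N : ℕ} (u v : Spc N → ℝ) (x : Spc N) : ℝ :=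
  ∑ i, pdir (fun y => u y * pdir v i y) i x

/-- Membership in `C_unif^b(ℝ^N)`: bounded and uniformly continuous. -/
def CunifB {N : ℕ} (f : Spc N → ℝ) : Prop :=
  UniformContinuous f ∧ ∃ M, ∀ x, |f x| ≤ M

/-- `t ∈ [0, T)` for an extended-real final time `T`. -/
def InT (t : ℝ) (T : ℝ≥0∞) : Prop := 0 ≤ t ∧ ENNReal.ofReal t < T

/-- Classical solution of (KS) on `ℝ^N × [0,T)`:  `u, v` continuous on `ℝ^N × [0,T)`,
twice continuously differentiable in `x` and once differentiable in `t` on `ℝ^N × (0,T)`,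
satisfying `u_t = Δu - χ ∇·(u∇v) + u(a - bu)` and `0 = Δv + u - v` pointwise there,
with `v(·,t)` bounded for each `t`. -/
structure IsClassicalKS (N : ℕ) (χ a b : ℝ) (T : ℝ≥0∞)
    (u v : Spc N → ℝ → ℝ) : Prop where
  contu : ContinuousOn (fun q : Spc N × ℝ => u q.1 q.2) {q | InT q.2 T}
  contv : ContinuousOn (fun q : Spc N × ℝ => v q.1 q.2) {q | InT q.2 T}
  cdu : ∀ t : ℝ, 0 < t → ENNReal.ofReal t < T → ContDiff ℝ 2 fun x => u x t
  cdv : ∀ t : ℝ, 0 < t → ENNReal.ofReal t < T → ContDiff ℝ 2 fun x => v x t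
  difft : ∀ x, ∀ t : ℝ, 0 < t → ENNReal.ofReal t < T → DifferentiableAt ℝ (u x) t
  equ : ∀ x, ∀ t : ℝ, 0 < t → ENNReal.ofReal t < T →
    deriv (u x) t =
      lapl (fun y => u y t) x - χ * divg (fun y => u y t) (fun y => v y t) x
        + u x t * (a - b * u x t)
  eqv : ∀ x, ∀ t : ℝ, 0 < t → ENNReal.ofReal t < T →
    0 = lapl (fun y => v y t) x + u x t - v x t
  vbdd : ∀ t : ℝ, InT t T → ∃ M, ∀ x, |v x t| ≤ M

/-- Classical solution of (KS) on `ℝ^N × (0,T)` (no regularity required at `t = 0`). -/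
structure IsClassicalKSOpen (N : ℕ) (χ a b : ℝ) (T : ℝ≥0∞)
    (u v : Spc N → ℝ → ℝ) : Prop where
  cdu : ∀ t : ℝ, 0 < t → ENNReal.ofReal t < T → ContDiff ℝ 2 fun x => u x t
  cdv : ∀ t : ℝ, 0 < t → ENNReal.ofReal t < T → ContDiff ℝ 2 fun x => v x t
  difft : ∀ x, ∀ t : ℝ, 0 < t → ENNReal.ofReal t < T → DifferentiableAt ℝ (u x) t
  equ : ∀ x, ∀ t : ℝ, 0 < t → ENNReal.ofReal t < T →
    deriv (u x) t =
      lapl (fun y => u y t) x - χ * divg (fun y => u y t) (fun y => v y t) x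
        + u x t * (a - b * u x t)
  eqv : ∀ x, ∀ t : ℝ, 0 < t → ENNReal.ofReal t < T →
    0 = lapl (fun y => v y t) x + u x t - v x t
  vbdd : ∀ t : ℝ, 0 < t → ENNReal.ofReal t < T → ∃ M, ∀ x, |v x t| ≤ M

/-- Nonnegativity of a solution pair on `ℝ^N × [0,T)`. -/
def NonnegOn {N : ℕ} (u v : Spc N → ℝ → ℝ) (T : ℝ≥0∞) : Prop :=
  ∀ x, ∀ t : ℝ, InT t T → 0 ≤ u x t ∧ 0 ≤ v x t

/-- Nonnegativity of a solution pair on `ℝ^N × (0,T)`. -/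
def NonnegOnOpen {N : ℕ} (u v : Spc N → ℝ → ℝ) (T : ℝ≥0∞) : Prop :=
  ∀ x, ∀ t : ℝ, 0 < t → ENNReal.ofReal t < T → 0 ≤ u x t ∧ 0 ≤ v x t

/-- Continuity of `t ↦ u(·,t)` from `[0,T)` into `C_unif^b(ℝ^N)` with the sup-norm. -/
def SupContOn {N : ℕ} (u : Spc N → ℝ → ℝ) (T : ℝ≥0∞) : Prop :=
  (∀ t : ℝ, InT t T → CunifB fun x => u x t) ∧
  ∀ t₀ : ℝ, InT t₀ T → ∀ ε : ℝ, 0 < ε → ∃ δ > 0, ∀ t : ℝ, InT t T → |t - t₀| < δ →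
    ∀ x, |u x t - u x t₀| ≤ ε

/-- `t ↦ u(·,t)` takes values in `L^p`, is continuous from `[0,T)` into `L^p`,
and has value `u₀` at `t = 0` in the `L^p` sense. -/
def LpContOn {N : ℕ} (u : Spc N → ℝ → ℝ) (u₀ : Spc N → ℝ) (p T : ℝ≥0∞) : Prop :=
  (∀ t : ℝ, 0 < t → ENNReal.ofReal t < T → MemLp (fun x => u x t) p volume) ∧
  Tendsto (fun t => eLpNorm (fun x => u x t - u₀ x) p volume)
    (nhdsWithin 0 (Set.Ioi 0)) (nhds 0) ∧
  ∀ t₀ : ℝ, 0 < t₀ → ENNReal.ofReal t₀ < T →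
    Tendsto (fun t => eLpNorm (fun x => u x t - u x t₀) p volume)
      (nhdsWithin t₀ {t | 0 < t ∧ ENNReal.ofReal t < T}) (nhds 0)

/-- The heat kernel `G(x,t) = (4πt)^{-N/2} exp(-|x|²/(4t))`. -/
noncomputable def heatK (N : ℕ) (x : Spc N) (t : ℝ) : ℝ :=
  (4 * π * t) ^ (-(N : ℝ) / 2) * Real.exp (-‖x‖ ^ 2 / (4 * t))

/-- The resolvent `(I - Δ)⁻¹ u`, as the Laplace transform of the heat semigroup. -/
noncomputable def resolv {N : ℕ} (u : Spc N → ℝ) (x : Spc N) : ℝ :=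
  ∫ s in Set.Ioi (0 : ℝ), Real.exp (-s) * ∫ z, heatK N (x - z) s * u z

/-!
For `|x| ≥ ct` and `c* < c - δ`, split `∫ G(x - z, s) u(z, t) dz` according to whether `z` lies
in the ball `|x - z| < δt`. On that ball `|z| ≥ (c - δ)t`, so `u` is small there and its
contribution is at most `ε/2`, since `G(·, s)` has unit mass. Off the ball,
`G(w, s) = 2^{N/2} e^{-|w|²/(8s)} G(w, 2s) ≤ 2^{N/2} e^{-(δt)²/(8s)} G(w, 2s)`, so that part is
at most `2^{N/2} M e^{-R²/(8s)}` with `R = δt`. Finally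
`e^{-s} e^{-R²/(8s)} ≤ e^{-R/2} e^{-s/2}` (AM-GM), so after the Laplace transform in `s` the off-ball part is `O(e^{-δt/2})`.
-/

section HeatKernel

variable {N : ℕ} {s : ℝ}

lemma heatK_nonneg (hs : 0 < s) (w : Spc N) : 0 ≤ heatK N w s := by
  unfold heatK; positivity

lemma integral_heatK (hs : 0 < s) : ∫ w, heatK N w s = 1 := by
  have hb : 0 < 1 / (4 * s) := by positivity
  simp_rw [heatK, div_eq_mul_one_div (-‖_‖ ^ 2), mul_comm (-‖_‖ ^ 2), ← neg_mul_comm]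
  rw [integral_const_mul, GaussianFourier.integral_rexp_neg_mul_sq_norm hb,
    finrank_euclideanSpace_fin, show π / (1 / (4 * s)) = 4 * π * s by field_simp,
    ← Real.rpow_add (by positivity), neg_div, neg_add_cancel, Real.rpow_zero]

lemma integrable_heatK (hs : 0 < s) : Integrable (heatK N · s) :=
  .of_integral_ne_zero (by rw [integral_heatK hs]; exact one_ne_zero)

lemma heatK_eq_mul_heatK_two_mul (hs : 0 < s) (w : Spc N) :
    heatK N w s = 2 ^ ((N : ℝ) / 2) * rexp (-‖w‖ ^ 2 / (8 * s)) * heatK N w (2 * s) := by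
  have h2 : (2 : ℝ) ^ ((N : ℝ) / 2) * 2 ^ (-(N : ℝ) / 2) = 1 := by
    rw [← Real.rpow_add two_pos, neg_div, add_neg_cancel, Real.rpow_zero]
  have hexp : rexp (-‖w‖ ^ 2 / (4 * s)) =
      rexp (-‖w‖ ^ 2 / (8 * s)) * rexp (-‖w‖ ^ 2 / (4 * (2 * s))) := by
    rw [← Real.exp_add]; congr 1; field_simp; ring
  rw [heatK, heatK, show 4 * π * (2 * s) = 2 * (4 * π * s) by ring,
    Real.mul_rpow zero_le_two (by positivity), hexp]
  linear_combination (-(4 * π * s) ^ (-(N : ℝ) / 2) * rexp (-‖w‖ ^ 2 / (8 * s)) *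
    rexp (-‖w‖ ^ 2 / (4 * (2 * s)))) * h2

end HeatKernel

lemma exp_neg_mul_exp_neg_sq_div_le (R : ℝ) {s : ℝ} (hs : 0 < s) :
    rexp (-s) * rexp (-R ^ 2 / (8 * s)) ≤ rexp (-(R / 2)) * rexp (-(1 / 2) * s) := by
  rw [← Real.exp_add, ← Real.exp_add, Real.exp_le_exp]
  have : R / 2 - s / 2 ≤ R ^ 2 / (8 * s) := by
    rw [le_div_iff₀ (by positivity)]
    nlinarith [sq_nonneg (R - 2 * s)]
  rw [neg_div]
  linarith

section Resolvent

variable {N : ℕ} {f : Spc N → ℝ} {x : Spc N} {M R η : ℝ}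

lemma integral_heatK_sub_mul_le (hR : 0 < R) (hf0 : ∀ z, 0 ≤ f z) (hfM : ∀ z, f z ≤ M)
    (hnear : ∀ z, ‖x - z‖ < R → f z ≤ η) {s : ℝ} (hs : 0 < s) :
    ∫ z, heatK N (x - z) s * f z ≤ η + 2 ^ ((N : ℝ) / 2) * M * rexp (-R ^ 2 / (8 * s)) := by
  have hη : 0 ≤ η := (hf0 x).trans (hnear x (by simpa using hR))
  have hM : 0 ≤ M := (hf0 x).trans (hfM x)
  set C := 2 ^ ((N : ℝ) / 2) * M * rexp (-R ^ 2 / (8 * s)) with hC_def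
  have hC : 0 ≤ C := by positivity
  have hs2 : 0 < 2 * s := by positivity
  have hint₁ := ((integrable_heatK (N := N) hs).comp_sub_left x).mul_const η
  have hint₂ := ((integrable_heatK (N := N) hs2).comp_sub_left x).const_mul C
  have hbound : ∀ z,
      heatK N (x - z) s * f z ≤ heatK N (x - z) s * η + C * heatK N (x - z) (2 * s) := by
    intro z
    have hG := heatK_nonneg hs (x - z)
    have hG2 := heatK_nonneg hs2 (x - z)
    by_cases hz : ‖x - z‖ < R
    · nlinarith [mul_le_mul_of_nonneg_left (hnear z hz) hG, mul_nonneg hC hG2]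
    · have hdecay : rexp (-‖x - z‖ ^ 2 / (8 * s)) ≤ rexp (-R ^ 2 / (8 * s)) := by
        gcongr
        exact le_of_not_gt hz
      calc heatK N (x - z) s * f z
          = 2 ^ ((N : ℝ) / 2) * rexp (-‖x - z‖ ^ 2 / (8 * s)) * f z
              * heatK N (x - z) (2 * s) := by
            rw [heatK_eq_mul_heatK_two_mul hs]; ring
        _ ≤ C * heatK N (x - z) (2 * s) := by
            gcongr
            rw [hC_def, mul_right_comm]
            gcongr
            exact hfM z
        _ ≤ heatK N (x - z) s * η + C * heatK N (x - z) (2 * s) := by nlinarith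
  calc ∫ z, heatK N (x - z) s * f z
      ≤ ∫ z, (heatK N (x - z) s * η + C * heatK N (x - z) (2 * s)) :=
        integral_mono_of_nonneg (.of_forall fun z => mul_nonneg (heatK_nonneg hs _) (hf0 z))
          (hint₁.add hint₂) (.of_forall hbound)
    _ = η + C := by
        rw [integral_add hint₁ hint₂, integral_mul_const, integral_const_mul,
          integral_sub_left_eq_self (heatK N · s), integral_sub_left_eq_self (heatK N · (2 * s)),
          integral_heatK hs, integral_heatK hs2]
        ring


lemma resolv_le_of_le_near (hR : 0 < R) (hf0 : ∀ z, 0 ≤ f z) (hfM : ∀ z, f z ≤ M)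
    (hnear : ∀ z, ‖x - z‖ < R → f z ≤ η) :
    resolv f x ≤ η + 2 * (2 ^ ((N : ℝ) / 2) * M) * rexp (-(R / 2)) := by
  set K := 2 ^ ((N : ℝ) / 2) * M
  have hK : 0 ≤ K := by
    have := (hf0 x).trans (hfM x); positivity
  have hint₁ : IntegrableOn (fun s => rexp (-s) * η) (Ioi 0) :=
    (integrableOn_exp_neg_Ioi 0).mul_const η
  have hint₂ : IntegrableOn (fun s => K * rexp (-(R / 2)) * rexp (-(1 / 2) * s)) (Ioi 0) :=
    (integrableOn_exp_mul_Ioi (by norm_num) 0).const_mul _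
  have hbound : ∀ s ∈ Ioi (0 : ℝ), rexp (-s) * ∫ z, heatK N (x - z) s * f z ≤
      rexp (-s) * η + K * rexp (-(R / 2)) * rexp (-(1 / 2) * s) := by
    intro s hs
    calc rexp (-s) * ∫ z, heatK N (x - z) s * f z
        ≤ rexp (-s) * (η + K * rexp (-R ^ 2 / (8 * s))) := by
          gcongr; exact integral_heatK_sub_mul_le hR hf0 hfM hnear hs
      _ = rexp (-s) * η + K * (rexp (-s) * rexp (-R ^ 2 / (8 * s))) := by ring
      _ ≤ rexp (-s) * η + K * (rexp (-(R / 2)) * rexp (-(1 / 2) * s)) := by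
          gcongr _ + _ * ?_
          exact exp_neg_mul_exp_neg_sq_div_le R hs
      _ = _ := by ring
  calc resolv f x
      ≤ ∫ s in Ioi 0, (rexp (-s) * η + K * rexp (-(R / 2)) * rexp (-(1 / 2) * s)) := by
        refine integral_mono_of_nonneg ?_ (hint₁.add hint₂) ?_
        all_goals filter_upwards [ae_restrict_mem measurableSet_Ioi] with s hs
        · exact mul_nonneg (Real.exp_nonneg _)
            (integral_nonneg fun z => mul_nonneg (heatK_nonneg hs _) (hf0 z))
        · exact hbound s hs
    _ = η + 2 * K * rexp (-(R / 2)) := by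
        rw [integral_add hint₁ hint₂, integral_mul_const, integral_const_mul,
          integral_exp_neg_Ioi_zero, integral_exp_mul_Ioi (by norm_num)]
        norm_num
        ring

end Resolvent

theorem resolvent_inherits_outer_spreading_general
    (N : ℕ) (cstar : ℝ)
    (u : Spc N → ℝ → ℝ)
    (hnn : ∀ x, ∀ t : ℝ, 0 ≤ t → 0 ≤ u x t)
    (hbdd : ∃ M, ∀ x, ∀ t : ℝ, 0 ≤ t → u x t ≤ M)
    (hyp : ∀ c : ℝ, cstar < c → ∀ ε : ℝ, 0 < ε →
      ∃ T : ℝ, ∀ t : ℝ, T ≤ t → ∀ x : Spc N, c * t ≤ ‖x‖ → u x t < ε) :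
    ∀ c : ℝ, cstar < c → ∀ ε : ℝ, 0 < ε →
      ∃ T : ℝ, ∀ t : ℝ, T ≤ t → ∀ x : Spc N, c * t ≤ ‖x‖ →
        resolv (fun y => u y t) x < ε := by
  intro c hc ε hε
  obtain ⟨M, hM⟩ := hbdd
  obtain ⟨δ, hδ, hcδ⟩ : ∃ δ, 0 < δ ∧ cstar < c - δ :=
    ⟨(c - cstar) / 2, by linarith, by linarith⟩
  obtain ⟨T₀, hT₀⟩ := hyp (c - δ) hcδ (ε / 2) (half_pos hε)
  set K := 2 * (2 ^ ((N : ℝ) / 2) * M)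
  have hdecay : Tendsto (fun t => K * rexp (-(δ * t / 2))) atTop (nhds 0) := by
    simpa using (tendsto_exp_neg_atTop_nhds_zero.comp
      ((tendsto_id.const_mul_atTop hδ).atTop_div_const two_pos)).const_mul K
  obtain ⟨T, hT⟩ := eventually_atTop.1 ((eventually_ge_atTop T₀).and
    ((eventually_gt_atTop 0).and (hdecay.eventually_lt_const (half_pos hε))))
  refine ⟨T, fun t ht x hx => ?_⟩
  obtain ⟨htT₀, ht, hsmall⟩ := hT t ht
  have hnear : ∀ z, ‖x - z‖ < δ * t → u z t ≤ ε / 2 := fun z hz =>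
    (hT₀ t htT₀ z (by nlinarith [norm_sub_norm_le x z])).le
  calc resolv (fun y => u y t) x ≤ ε / 2 + K * rexp (-(δ * t / 2)) :=
        resolv_le_of_le_near (by positivity) (fun z => hnn z t ht.le) (fun z => hM z t ht.le)
          hnear
    _ < ε := by linarith

/-- Lemma 5.5 (ii): if `u` is continuous, nonnegative and bounded on
`ℝ^N × [0,∞)` and `u(x,t) → 0` uniformly on `{|x| ≥ ct}` for every `c > c*`, then the
resolvent `v(·,t) = (I-Δ)⁻¹ u(·,t)` satisfies the same convergence. -/
theorem resolvent_inherits_outer_spreading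
    (N : ℕ) (hN : 1 ≤ N) (cstar : ℝ) (hc : 0 < cstar)
    (u : Spc N → ℝ → ℝ)
    (hcont : ContinuousOn (fun q : Spc N × ℝ => u q.1 q.2) {q | 0 ≤ q.2})
    (hnn : ∀ x, ∀ t : ℝ, 0 ≤ t → 0 ≤ u x t)
    (hbdd : ∃ M, ∀ x, ∀ t : ℝ, 0 ≤ t → u x t ≤ M)
    (hyp : ∀ c : ℝ, cstar < c → ∀ ε : ℝ, 0 < ε →
      ∃ T : ℝ, ∀ t : ℝ, T ≤ t → ∀ x : Spc N, c * t ≤ ‖x‖ → u x t < ε) :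
    ∀ c : ℝ, cstar < c → ∀ ε : ℝ, 0 < ε →
      ∃ T : ℝ, ∀ t : ℝ, T ≤ t → ∀ x : Spc N, c * t ≤ ‖x‖ →
        resolv (fun y => u y t) x < ε :=
  resolvent_inherits_outer_spreading_general N cstar u hnn hbdd hyp
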